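/- For every positive integer n, there exists a finite simple graph H_n such that η(H_n) = n; that is, H_n admits a link-irregular labeling using n distinct labels but none using fewer than n distinct labels. -/

import Mathlib

open SimpleGraph

variable {V : Type*}

/-- Two vertices have isomorphic labeled links: an equivalence of neighborhoods preserving
adjacency and edge labels. -/
def LabeledLinkIso (G : SimpleGraph V) (ℓ : Sym2 V → ℕ+) (u v : V) : Prop :=
  ∃ e : (G.neighborSet u) ≃ (G.neighborSet v),
    (∀ a b : G.neighborSet u, G.Adj a.1 b.1 ↔ G.Adj (e a).1 (e b).1) ∧
    (∀ a b : G.neighborSet u, G.Adj a.1 b.1 → ℓ s(a.1, b.1) = ℓ s((e a).1, (e b).1))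

/-- An edge labeling is link-irregular if distinct vertices have non-isomorphic labeled links. -/
def IsLinkIrregular (G : SimpleGraph V) (ℓ : Sym2 V → ℕ+) : Prop :=
  ∀ u v : V, u ≠ v → ¬ LabeledLinkIso G ℓ u v

/-- A graph admits a link-irregular labeling. -/
def HasLinkIrregularLabeling (G : SimpleGraph V) : Prop :=
  ∃ ℓ : Sym2 V → ℕ+, IsLinkIrregular G ℓ

/-- The link-irregular labeling number η(G): the minimum number of distinct labels used
on the edges of G over all link-irregular labelings, or ∞ if none exists. -/
noncomputable def linkIrregularNumber (G : SimpleGraph V) : ℕ∞ :=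
  sInf {c : ℕ∞ | ∃ ℓ : Sym2 V → ℕ+, IsLinkIrregular G ℓ ∧ c = ((ℓ '' G.edgeSet).ncard : ℕ∞)}

/-- The edge set of the link of x, viewed as a set of edges of G. -/
def linkEdgeSet (G : SimpleGraph V) (x : V) : Set (Sym2 V) :=
  {e | e ∈ G.edgeSet ∧ ∀ v ∈ e, v ∈ G.neighborSet x}

/-- Active neighborhood. -/
def activeNeighborSet (G : SimpleGraph V) (x : V) : Set V :=
  {u ∈ G.neighborSet x | ∃ w ∈ G.neighborSet x, G.Adj u w}

/-- A graph is cut-irregular if distinct vertex-deleted subgraphs are non-isomorphic. -/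
def CutIrregular (H : SimpleGraph V) : Prop :=
  ∀ u v : V, u ≠ v → ¬ Nonempty ((H.induce ({u} : Set V)ᶜ) ≃g (H.induce ({v} : Set V)ᶜ))

/-- The wheel graph W_n: a cycle C_n together with a universal vertex. -/
def wheelGraph (n : ℕ) : SimpleGraph (Option (Fin n)) where
  Adj x y :=
    match x, y with
    | none, none => False
    | none, some _ => True
    | some _, none => True
    | some i, some j => (cycleGraph n).Adj i j
  symm := by
    constructor
    rintro (_|i) (_|j) h
    · exact h
    · trivial
    · trivial
    · exact (cycleGraph n).adj_symm h
  loopless := by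
    constructor
    rintro (_|i) h
    · exact h
    · exact (cycleGraph n).irrefl h

/-- The join of two graphs. -/
def graphJoin {W : Type*} (G : SimpleGraph V) (H : SimpleGraph W) : SimpleGraph (V ⊕ W) where
  Adj x y :=
    match x, y with
    | Sum.inl a, Sum.inl b => G.Adj a b
    | Sum.inr a, Sum.inr b => H.Adj a b
    | _, _ => True
  symm := by
    constructor
    rintro (a|a) (b|b) h
    · exact G.adj_symm h
    · trivial
    · trivial
    · exact H.adj_symm h
  loopless := by
    constructor
    rintro (a|a) h
    · exact G.irrefl h
    · exact H.irrefl h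

/-- The hypercube graph Q_n. -/
def hypercubeGraph (n : ℕ) : SimpleGraph (Fin n → Bool) where
  Adj x y := (Finset.univ.filter fun i => x i ≠ y i).card = 1
  symm := by
    constructor
    intro x y h
    have : (Finset.univ.filter fun i => y i ≠ x i) = (Finset.univ.filter fun i => x i ≠ y i) := by
      apply Finset.filter_congr
      intro i _
      simp [ne_comm]
    rw [this]
    exact h
  loopless := by
    constructor
    intro x h
    simp at h

/-!
A link-irregular labeling must give distinct labels to the link edges of distinct vertices whose
links are single edges, so η is at least the number of such vertices. In the windmill of `k + 1`
triangles every blade is such a vertex, its link edge being the spoke to its partner blade. A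
pendant at the apex keeps all `2k + 2` of them, a pendant at one blade removes one; labeling the
spokes `1, 2, …` and every other edge `1` attains the bound, as all vertices other than the
remaining blades are told apart by their degrees. For `n = 1`, a six-vertex graph whose links
are pairwise non-isomorphic works with a constant labeling.
-/

namespace LabeledLinkIso

variable {G : SimpleGraph V} {ℓ : Sym2 V → ℕ+} {u v : V}

theorem ncard_neighborSet_eq (h : LabeledLinkIso G ℓ u v) :
    (G.neighborSet u).ncard = (G.neighborSet v).ncard := by
  obtain ⟨e, -, -⟩ := h
  simpa only [Nat.card_coe_set_eq] using Nat.card_congr e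

end LabeledLinkIso

section SingleEdgeLink

variable {G : SimpleGraph V} {a b x y : V}

theorem SimpleGraph.Adj.adj_iff_ne_of_mem_pair (hab : G.Adj a b) (hx : x ∈ ({a, b} : Set V))
    (hy : y ∈ ({a, b} : Set V)) : G.Adj x y ↔ x ≠ y := by
  simp only [Set.mem_insert_iff, Set.mem_singleton_iff] at hx hy
  rcases hx with rfl | rfl <;> rcases hy with rfl | rfl <;>
    simp [hab, hab.symm, hab.ne, hab.ne.symm]

theorem Sym2.eq_mk_of_mem_pair (hx : x ∈ ({a, b} : Set V)) (hy : y ∈ ({a, b} : Set V))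
    (hxy : x ≠ y) : s(x, y) = s(a, b) :=
  Sym2.eq_of_ne_mem hxy (Sym2.mem_mk_left x y) (Sym2.mem_mk_right x y)
    (Sym2.mem_iff.2 hx) (Sym2.mem_iff.2 hy)

theorem labeledLinkIso_iff_of_neighborSet_eq_pair {ℓ : Sym2 V → ℕ+} {v v' a' b' : V}
    (hv : G.neighborSet v = {a, b}) (hv' : G.neighborSet v' = {a', b'}) (hab : G.Adj a b)
    (hab' : G.Adj a' b') : LabeledLinkIso G ℓ v v' ↔ ℓ s(a, b) = ℓ s(a', b') := by
  have mem : ∀ p : G.neighborSet v, p.1 ∈ ({a, b} : Set V) := fun p => hv ▸ p.2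
  have mem' : ∀ p : G.neighborSet v', p.1 ∈ ({a', b'} : Set V) := fun p => hv' ▸ p.2
  constructor
  · rintro ⟨e, -, hlab⟩
    have ha : a ∈ G.neighborSet v := hv ▸ Set.mem_insert a {b}
    have hb : b ∈ G.neighborSet v := hv ▸ Set.mem_insert_of_mem a rfl
    have hne : (e ⟨a, ha⟩).1 ≠ (e ⟨b, hb⟩).1 := fun h =>
      hab.ne (congrArg Subtype.val (e.injective (Subtype.ext h)))
    rw [hlab ⟨a, ha⟩ ⟨b, hb⟩ hab, Sym2.eq_mk_of_mem_pair (mem' _) (mem' _) hne]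
  · intro hl
    have : Finite (G.neighborSet v) := hv ▸ inferInstance
    have : Finite (G.neighborSet v') := hv' ▸ inferInstance
    obtain ⟨e⟩ := Finite.card_eq.1 (by
      rw [Nat.card_coe_set_eq, Nat.card_coe_set_eq, hv, hv', Set.ncard_pair hab.ne,
        Set.ncard_pair hab'.ne] : Nat.card (G.neighborSet v) = Nat.card (G.neighborSet v'))
    have adj : ∀ p q : G.neighborSet v, G.Adj p.1 q.1 ↔ G.Adj (e p).1 (e q).1 := fun p q => by
      rw [hab.adj_iff_ne_of_mem_pair (mem p) (mem q),
        hab'.adj_iff_ne_of_mem_pair (mem' _) (mem' _), Ne, Ne, ← Subtype.ext_iff,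
        ← Subtype.ext_iff, e.apply_eq_iff_eq]
    refine ⟨e, adj, fun p q hpq => ?_⟩
    rw [Sym2.eq_mk_of_mem_pair (mem p) (mem q) hpq.ne,
      Sym2.eq_mk_of_mem_pair (mem' _) (mem' _) ((adj p q).1 hpq).ne, hl]

end SingleEdgeLink

theorem IsLinkIrregular.card_le_ncard_image [Finite V] {G : SimpleGraph V} {ℓ : Sym2 V → ℕ+}
    (hℓ : IsLinkIrregular G ℓ) {ι : Type*} {v a b : ι → V} (hv : Function.Injective v)
    (hN : ∀ i, G.neighborSet (v i) = {a i, b i}) (hab : ∀ i, G.Adj (a i) (b i)) :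
    Nat.card ι ≤ (ℓ '' G.edgeSet).ncard := by
  have hinj : Function.Injective fun i => ℓ s(a i, b i) := fun i j hij => by
    by_contra hne
    exact hℓ _ _ (hv.ne hne)
      ((labeledLinkIso_iff_of_neighborSet_eq_pair (hN i) (hN j) (hab i) (hab j)).2 hij)
  rw [← Nat.card_range_of_injective hinj, Nat.card_coe_set_eq]
  refine Set.ncard_le_ncard ?_ (Set.toFinite _)
  rintro _ ⟨i, rfl⟩
  exact ⟨_, hab i, rfl⟩

theorem ncard_le_of_forall_coe_le {s : Set ℕ+} {n : ℕ} (h : ∀ k ∈ s, (k : ℕ) ≤ n) :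
    s.ncard ≤ n := by
  calc s.ncard = (PNat.val '' s).ncard :=
        (Set.ncard_image_of_injective s PNat.coe_injective).symm
    _ ≤ (Set.Icc 1 n).ncard := Set.ncard_le_ncard
        (by rintro _ ⟨k, hk, rfl⟩; exact ⟨k.pos, h k hk⟩) (Set.finite_Icc 1 n)
    _ = n := by simp

theorem linkIrregularNumber_eq_of_le {G : SimpleGraph V} {n : ℕ} {ℓ₀ : Sym2 V → ℕ+}
    (h₀ : IsLinkIrregular G ℓ₀) (hℓ₀ : ∀ e ∈ G.edgeSet, (ℓ₀ e : ℕ) ≤ n)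
    (hlow : ∀ ℓ, IsLinkIrregular G ℓ → n ≤ (ℓ '' G.edgeSet).ncard) :
    linkIrregularNumber G = n := by
  refine le_antisymm ?_ (le_sInf ?_)
  · calc linkIrregularNumber G ≤ ((ℓ₀ '' G.edgeSet).ncard : ℕ∞) :=
          sInf_le ⟨ℓ₀, h₀, rfl⟩
      _ ≤ n := by
        exact_mod_cast ncard_le_of_forall_coe_le (by rintro _ ⟨e, he, rfl⟩; exact hℓ₀ e he)
  · rintro _ ⟨ℓ, hℓ, rfl⟩
    exact_mod_cast hlow ℓ hℓ

namespace WindmillWithPendant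

variable {k : ℕ} {onBlade : Bool}

abbrev Vertex (k : ℕ) : Type := Option (Option (Fin (k + 1) × Bool))

def partner (z : Fin (k + 1) × Bool) : Fin (k + 1) × Bool := (z.1, !z.2)

@[simp] theorem partner_partner (z : Fin (k + 1) × Bool) : partner (partner z) = z := by
  simp [partner]

theorem partner_injective : Function.Injective (partner (k := k)) :=
  Function.LeftInverse.injective partner_partner

theorem partner_ne (z : Fin (k + 1) × Bool) : partner z ≠ z := by
  simp [partner, Prod.ext_iff]

def anchor (k : ℕ) : Fin (k + 1) × Bool := (Fin.last k, false)

/-- The windmill of `k + 1` triangles on the apex `none`, whose blades `some (some z)` are paired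
by `partner`, with a pendant vertex `some none` hanging off the apex if `onBlade = false` and off
the blade `anchor k` if `onBlade = true`. -/
def graph (k : ℕ) (onBlade : Bool) : SimpleGraph (Vertex k) where
  Adj x y :=
    match x, y with
    | none, some (some _) => True
    | some (some _), none => True
    | some (some z), some (some w) => w = partner z
    | none, some none => onBlade = false
    | some none, none => onBlade = false
    | some none, some (some z) => onBlade = true ∧ z = anchor k
    | some (some z), some none => onBlade = true ∧ z = anchor k
    | _, _ => False
  symm := by
    constructor
    rintro (_ | _ | z) (_ | _ | w) h <;>
      first | exact h | exact (partner_partner z ▸ congrArg partner h).symm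
  loopless := by
    constructor
    rintro (_ | _ | z) h
    all_goals first | exact h | exact partner_ne z h.symm

def IsOrdinary (onBlade : Bool) (z : Fin (k + 1) × Bool) : Prop :=
  onBlade = true → z ≠ anchor k

theorem neighborSet_blade {z : Fin (k + 1) × Bool} (hz : IsOrdinary onBlade z) :
    (graph k onBlade).neighborSet (some (some z)) = {none, some (some (partner z))} := by
  ext (_ | _ | w) <;> simp [graph]
  exact hz

theorem neighborSet_anchor :
    (graph k true).neighborSet (some (some (anchor k))) =
      {none, some (some (partner (anchor k))), some none} := by
  ext (_ | _ | w) <;> simp [graph]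

theorem neighborSet_pendant_of_false :
    (graph k false).neighborSet (some none) = {none} := by
  ext (_ | _ | w) <;> simp [graph]

theorem neighborSet_pendant_of_true :
    (graph k true).neighborSet (some none) = {some (some (anchor k))} := by
  ext (_ | _ | w) <;> simp [graph, eq_comm]

theorem neighborSet_apex_of_false :
    (graph k false).neighborSet none = insert (some none) (Set.range (some ∘ some)) := by
  ext (_ | _ | w) <;> simp [graph]

theorem neighborSet_apex_of_true :
    (graph k true).neighborSet none = Set.range (some ∘ some) := by
  ext (_ | _ | w) <;> simp [graph]

theorem ncard_range_blade : (Set.range (some ∘ some : _ → Vertex k)).ncard = 2 * (k + 1) := by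
  rw [← Set.image_univ, Set.ncard_image_of_injective _ ((Option.some_injective _).comp
    (Option.some_injective _)), Set.ncard_univ]
  simp [mul_comm]

theorem ncard_neighborSet (x : Vertex k) :
    ((graph k onBlade).neighborSet x).ncard =
      match x with
      | none => 2 * (k + 1) + (!onBlade).toNat
      | some none => 1
      | some (some z) => if onBlade = true ∧ z = anchor k then 3 else 2 := by
  rcases x with _ | _ | z <;> cases onBlade
  · rw [neighborSet_apex_of_false, Set.ncard_insert_of_notMem (by simp), ncard_range_blade]; rfl
  · rw [neighborSet_apex_of_true, ncard_range_blade]; rfl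
  · simp [neighborSet_pendant_of_false]
  · simp [neighborSet_pendant_of_true]
  · rw [neighborSet_blade (by simp [IsOrdinary]), Set.ncard_pair (by simp)]; simp
  · by_cases hz : z = anchor k
    · subst hz
      rw [neighborSet_anchor, Set.ncard_insert_of_notMem (by simp), Set.ncard_pair (by simp)]
      simp
    · rw [neighborSet_blade (by simp [IsOrdinary, hz]), Set.ncard_pair (by simp)]; simp [hz]

theorem exists_ordinary_of_ncard_neighborSet_eq (hk : onBlade = true → 1 ≤ k)
    {x y : Vertex k} (hxy : x ≠ y)
    (h : ((graph k onBlade).neighborSet x).ncard = ((graph k onBlade).neighborSet y).ncard) :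
    ∃ z w, x = some (some z) ∧ y = some (some w) ∧ IsOrdinary onBlade z ∧
      IsOrdinary onBlade w := by
  rw [ncard_neighborSet, ncard_neighborSet] at h
  rcases x with _ | _ | z <;> rcases y with _ | _ | w <;> cases onBlade <;>
    simp [IsOrdinary] at hxy h hk ⊢
  all_goals grind

def size (k : ℕ) (onBlade : Bool) : ℕ := 2 * (k + 1) - onBlade.toNat

def code (z : Fin (k + 1) × Bool) : ℕ := 2 * z.1 + z.2.toNat

theorem code_injective : Function.Injective (code (k := k)) := by
  rintro ⟨i, _ | _⟩ ⟨j, _ | _⟩ h <;> simp [code, Fin.ext_iff] at h ⊢ <;> omega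

theorem code_partner_le {z : Fin (k + 1) × Bool} (hz : IsOrdinary onBlade z) :
    code (partner z) ≤ size k onBlade - 1 := by
  obtain ⟨⟨i, hi⟩, _ | _⟩ := z <;> cases onBlade <;>
    simp [code, partner, size, IsOrdinary, anchor, Fin.ext_iff] at hz ⊢ <;> omega

/-- The spoke to `z` gets label `code z + 1 ∈ {1, …, 2k + 2}`, cut down to `size k onBlade`. The
only spoke affected is the one to `partner (anchor k)` when `onBlade`; it lies in the link of the
anchor alone, which is singled out by its degree. -/
def spokeLabel (onBlade : Bool) (z : Fin (k + 1) × Bool) : ℕ+ :=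
  (min (code z) (size k onBlade - 1)).succPNat

def labeling (k : ℕ) (onBlade : Bool) : Sym2 (Vertex k) → ℕ+ :=
  Sym2.lift ⟨fun x y =>
    match x, y with
    | none, some (some z) => spokeLabel onBlade z
    | some (some z), none => spokeLabel onBlade z
    | _, _ => 1, by rintro (_ | _ | z) (_ | _ | w) <;> rfl⟩

theorem labeling_le (e : Sym2 (Vertex k)) : (labeling k onBlade e : ℕ) ≤ size k onBlade := by
  have hsize : 1 ≤ size k onBlade := by cases onBlade <;> simp [size] <;> omega
  induction e using Sym2.ind with
  | _ x y =>
    rcases x with _ | _ | z <;> rcases y with _ | _ | w <;> simp [labeling, spokeLabel] <;> omega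

theorem eq_of_spokeLabel_partner_eq {z w : Fin (k + 1) × Bool} (hz : IsOrdinary onBlade z)
    (hw : IsOrdinary onBlade w)
    (h : spokeLabel onBlade (partner z) = spokeLabel onBlade (partner w)) : z = w := by
  rw [spokeLabel, spokeLabel, min_eq_left (code_partner_le hz), min_eq_left (code_partner_le hw),
    Nat.succPNat_inj] at h
  exact partner_injective (code_injective h)

theorem isLinkIrregular_labeling (hk : onBlade = true → 1 ≤ k) :
    IsLinkIrregular (graph k onBlade) (labeling k onBlade) := by
  intro x y hxy hiso
  obtain ⟨z, w, rfl, rfl, hz, hw⟩ :=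
    exists_ordinary_of_ncard_neighborSet_eq hk hxy hiso.ncard_neighborSet_eq
  rw [labeledLinkIso_iff_of_neighborSet_eq_pair (neighborSet_blade hz) (neighborSet_blade hw)
    trivial trivial] at hiso
  exact hxy (congrArg (some ∘ some) (eq_of_spokeLabel_partner_eq hz hw hiso))

theorem card_isOrdinary :
    Nat.card {z : Fin (k + 1) × Bool // IsOrdinary onBlade z} = size k onBlade := by
  cases onBlade <;>
    simp [IsOrdinary, size, Nat.card_eq_fintype_card, Fintype.card_subtype_compl, mul_comm]

theorem size_le_ncard_image {ℓ : Sym2 (Vertex k) → ℕ+}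
    (hℓ : IsLinkIrregular (graph k onBlade) ℓ) :
    size k onBlade ≤ (ℓ '' (graph k onBlade).edgeSet).ncard := by
  rw [← card_isOrdinary]
  exact hℓ.card_le_ncard_image (v := fun z => some (some z.1)) (a := fun _ => none)
    (fun z w h => Subtype.ext (by simpa using h)) (fun z => neighborSet_blade z.2)
    fun _ => trivial

theorem linkIrregularNumber_graph (hk : onBlade = true → 1 ≤ k) :
    linkIrregularNumber (graph k onBlade) = size k onBlade :=
  linkIrregularNumber_eq_of_le (isLinkIrregular_labeling hk) (fun e _ => labeling_le e)
    fun _ => size_le_ncard_image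

theorem exists_size_eq {n : ℕ} (hn : 2 ≤ n) :
    ∃ k onBlade, (onBlade = true → 1 ≤ k) ∧ size k onBlade = n := by
  obtain ⟨k, rfl | rfl⟩ := n.even_or_odd'
  · exact ⟨k - 1, false, nofun, by simp [size]; omega⟩
  · exact ⟨k, true, fun _ => by omega, by simp [size]; omega⟩

end WindmillWithPendant

def sixVertexGraph : SimpleGraph (Fin 6) := SimpleGraph.fromRel fun a b =>
  (a, b) ∈ [((0 : Fin 6), (1 : Fin 6)), (0, 3), (0, 4), (0, 5), (1, 2), (1, 3), (1, 5), (2, 3),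
    (2, 4)]

instance : DecidableRel sixVertexGraph.Adj :=
  fun a b => decidable_of_iff _ (SimpleGraph.fromRel_adj _ a b).symm

theorem isLinkIrregular_sixVertexGraph : IsLinkIrregular sixVertexGraph fun _ => 1 := by
  unfold IsLinkIrregular LabeledLinkIso
  decide

theorem linkIrregularNumber_sixVertexGraph : linkIrregularNumber sixVertexGraph = 1 := by
  have hE : sixVertexGraph.edgeSet.Nonempty := ⟨s(0, 1), by decide⟩
  refine linkIrregularNumber_eq_of_le isLinkIrregular_sixVertexGraph (fun _ _ => le_rfl)
    fun ℓ _ => ?_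
  exact (Set.ncard_pos (Set.toFinite _)).2 (hE.image ℓ)

/-- for every positive integer n there is a finite graph H with η(H) = n. -/
theorem stmt_17 (n : ℕ) (hn : 0 < n) :
    ∃ (W : Type) (_ : Fintype W) (H : SimpleGraph W),
      linkIrregularNumber H = (n : ℕ∞) := by
  by_cases h1 : n = 1
  · subst h1
    exact ⟨Fin 6, inferInstance, sixVertexGraph,
      by simpa using linkIrregularNumber_sixVertexGraph⟩
  obtain ⟨k, onBlade, hk, rfl⟩ := WindmillWithPendant.exists_size_eq (n := n) (by omega)
  exact ⟨_, inferInstance, _, WindmillWithPendant.linkIrregularNumber_graph hk⟩
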